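/- Let δ_{k+1} = (1 - η_k) δ_k + η_k (F_k - λ u_k) in a normed space, where 0 ≤ η_k ≤ 1, ∑ η_k = ∞, ‖u_k‖ ≤ G, λ ≥ 0, and F_k → 0. Then limsup ‖δ_k‖ ≤ λ G. -/

import Mathlib

/-!
Taking norms, `‖δ_{k+1}‖ ≤ (1 - η_k) ‖δ_k‖ + η_k b_k` with `b_k = ‖F_k‖ + λG → λG`. Fix `M > λG`;
once `b_k ≤ M`, the excess `(‖δ_k‖ - M)⁺` is multiplied at each step by at most `1 - η_k`, and
`∏ (1 - η_k) ≤ exp (-∑ η_k) → 0`. So eventually `‖δ_k‖ ≤ M + ε` for every `ε > 0`.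
-/

open Filter Topology Finset

theorem prod_one_sub_le_exp_neg_sum {ι : Type*} (s : Finset ι) {x : ι → ℝ}
    (hx : ∀ i ∈ s, x i ≤ 1) : ∏ i ∈ s, (1 - x i) ≤ Real.exp (-∑ i ∈ s, x i) := by
  rw [← sum_neg_distrib, Real.exp_sum]
  exact prod_le_prod (fun i hi => sub_nonneg.2 (hx i hi))
    (fun i _ => by linarith [Real.add_one_le_exp (-x i)])

section Contraction

variable {η : ℕ → ℝ}

theorem tendsto_prod_range_one_sub_of_tendsto_sum (hη : ∀ k, η k ≤ 1)
    (hdiv : Tendsto (fun n => ∑ k ∈ range n, η k) atTop atTop) :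
    Tendsto (fun n => ∏ k ∈ range n, (1 - η k)) atTop (𝓝 0) :=
  squeeze_zero (fun _ => prod_nonneg fun k _ => sub_nonneg.2 (hη k))
    (fun _ => prod_one_sub_le_exp_neg_sum _ fun k _ => hη k)
    (Real.tendsto_exp_atBot.comp (tendsto_neg_atTop_atBot.comp hdiv))

theorem tendsto_sum_range_shift_atTop
    (hdiv : Tendsto (fun n => ∑ k ∈ range n, η k) atTop atTop) (N : ℕ) :
    Tendsto (fun n => ∑ k ∈ range n, η (k + N)) atTop atTop := by
  have hsplit : ∀ n, ∑ k ∈ range n, η (k + N) =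
      ∑ k ∈ range (n + N), η k + -∑ k ∈ range N, η k := fun n => by
    rw [add_comm n N, sum_range_add]
    simp_rw [add_comm N]
    ring
  simp only [hsplit]
  exact tendsto_atTop_add_const_right _ _ (hdiv.comp (tendsto_add_atTop_nat N))

theorem tendsto_zero_of_le_one_sub_mul {c : ℕ → ℝ} (hc : ∀ k, 0 ≤ c k) (hη : ∀ k, η k ≤ 1)
    (hdiv : Tendsto (fun n => ∑ k ∈ range n, η k) atTop atTop)
    (hrec : ∀ k, c (k + 1) ≤ (1 - η k) * c k) : Tendsto c atTop (𝓝 0) := by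
  have hbound : ∀ n, c n ≤ c 0 * ∏ k ∈ range n, (1 - η k) := by
    intro n
    induction n with
    | zero => simp
    | succ n ih =>
      calc c (n + 1) ≤ (1 - η n) * c n := hrec n
        _ ≤ (1 - η n) * (c 0 * ∏ k ∈ range n, (1 - η k)) := by
          gcongr
          linarith [hη n]
        _ = c 0 * ∏ k ∈ range (n + 1), (1 - η k) := by rw [prod_range_succ]; ring
  refine squeeze_zero hc hbound ?_
  simpa using (tendsto_prod_range_one_sub_of_tendsto_sum hη hdiv).const_mul (c 0)

theorem tendsto_zero_of_eventually_le_one_sub_mul {c : ℕ → ℝ} (hc : ∀ k, 0 ≤ c k)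
    (hη : ∀ k, η k ≤ 1) (hdiv : Tendsto (fun n => ∑ k ∈ range n, η k) atTop atTop)
    (hrec : ∀ᶠ k in atTop, c (k + 1) ≤ (1 - η k) * c k) : Tendsto c atTop (𝓝 0) := by
  obtain ⟨N, hN⟩ := eventually_atTop.1 hrec
  rw [← tendsto_add_atTop_iff_nat N]
  refine tendsto_zero_of_le_one_sub_mul (η := fun k => η (k + N)) (fun k => hc _)
    (fun k => hη _) (tendsto_sum_range_shift_atTop hdiv N) fun k => ?_
  simpa only [add_right_comm] using hN (k + N) (Nat.le_add_left _ _)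

variable {a b : ℕ → ℝ} (hη : ∀ k, 0 ≤ η k ∧ η k ≤ 1)
  (hdiv : Tendsto (fun n => ∑ k ∈ range n, η k) atTop atTop)
  (hrec : ∀ k, a (k + 1) ≤ (1 - η k) * a k + η k * b k)
include hη hdiv hrec

theorem eventually_le_add_of_le_one_sub_mul_add {M ε : ℝ} (hε : 0 < ε)
    (hb : ∀ᶠ k in atTop, b k ≤ M) : ∀ᶠ k in atTop, a k ≤ M + ε := by
  set c : ℕ → ℝ := fun k => max (a k - M) 0
  have hexcess : ∀ k, a k - M ≤ c k := fun k => le_max_left _ _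
  have hcontract : ∀ᶠ k in atTop, c (k + 1) ≤ (1 - η k) * c k := by
    filter_upwards [hb] with k hbk
    have h₁ : (1 - η k) * (a k - M) ≤ (1 - η k) * c k :=
      mul_le_mul_of_nonneg_left (hexcess k) (by linarith [hη k])
    have h₂ : η k * (b k - M) ≤ 0 := mul_nonpos_of_nonneg_of_nonpos (hη k).1 (by linarith)
    refine max_le ?_ (mul_nonneg (by linarith [hη k]) (le_max_right _ _))
    linarith [hrec k]
  have hc : Tendsto c atTop (𝓝 0) :=
    tendsto_zero_of_eventually_le_one_sub_mul (fun _ => le_max_right _ _)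
      (fun k => (hη k).2) hdiv hcontract
  filter_upwards [hc.eventually (gt_mem_nhds hε)] with k hk
  linarith [hexcess k]

theorem limsup_le_of_le_one_sub_mul_add {B : ℝ} (ha : ∀ k, 0 ≤ a k)
    (hb : Tendsto b atTop (𝓝 B)) : limsup a atTop ≤ B := by
  refine le_of_forall_pos_le_add fun ε hε => limsup_le_of_le (isCoboundedUnder_le_of_le _ ha) ?_
  have hbM : ∀ᶠ k in atTop, b k ≤ B + ε / 2 :=
    (hb.eventually (gt_mem_nhds (by linarith : B < B + ε / 2))).mono fun _ => le_of_lt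
  filter_upwards [eventually_le_add_of_le_one_sub_mul_add hη hdiv hrec (half_pos hε) hbM]
    with k hk
  linarith

end Contraction

theorem norm_one_sub_smul_add_smul_le {E : Type*} [SeminormedAddCommGroup E] [NormedSpace ℝ E]
    {t : ℝ} (h₀ : 0 ≤ t) (h₁ : t ≤ 1) (x y : E) :
    ‖(1 - t) • x + t • y‖ ≤ (1 - t) * ‖x‖ + t * ‖y‖ :=
  calc ‖(1 - t) • x + t • y‖ ≤ ‖(1 - t) • x‖ + ‖t • y‖ := norm_add_le _ _
    _ = (1 - t) * ‖x‖ + t * ‖y‖ := by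
      rw [norm_smul_of_nonneg (sub_nonneg.2 h₁), norm_smul_of_nonneg h₀]

theorem stmt_16 {E : Type*} [NormedAddCommGroup E] [NormedSpace ℝ E]
    (η : ℕ → ℝ) (hη : ∀ k, 0 ≤ η k ∧ η k ≤ 1)
    (hdiv : Filter.Tendsto (fun n => ∑ k ∈ Finset.range n, η k) Filter.atTop Filter.atTop)
    (u : ℕ → E) (G : ℝ) (hu : ∀ k, ‖u k‖ ≤ G)
    (lam : ℝ) (hlam : 0 ≤ lam)
    (F : ℕ → E) (hF : Filter.Tendsto F Filter.atTop (nhds 0))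
    (δ : ℕ → E)
    (hrec : ∀ k, δ (k + 1) = (1 - η k) • δ k + η k • (F k - lam • u k)) :
    Filter.limsup (fun k => ‖δ k‖) Filter.atTop ≤ lam * G := by
  have hstep : ∀ k, ‖δ (k + 1)‖ ≤ (1 - η k) * ‖δ k‖ + η k * (‖F k‖ + lam * G) := fun k => by
    rw [hrec k]
    refine (norm_one_sub_smul_add_smul_le (hη k).1 (hη k).2 _ _).trans ?_
    have hηk := (hη k).1
    gcongr
    calc ‖F k - lam • u k‖ ≤ ‖F k‖ + ‖lam • u k‖ := norm_sub_le _ _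
      _ ≤ ‖F k‖ + lam * G := by rw [norm_smul_of_nonneg hlam]; gcongr; exact hu k
  have hb : Tendsto (fun k => ‖F k‖ + lam * G) atTop (𝓝 (lam * G)) := by
    simpa using hF.norm.add_const (lam * G)
  exact limsup_le_of_le_one_sub_mul_add hη hdiv hstep (fun _ => norm_nonneg _) hb
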